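/- arXiv:1602.07758 — 6 statements merged into one kernel-verified Lean document; each statement's English description precedes it below -/
import Mathlib

section
/- Let T > 0, κ̄ ∈ ℝ, let φ̃ : ℝ → ℝ be T-periodic, set φ(t) = κ̄·t + φ̃(t), let v : ℝ → ℝ be continuous and T-periodic, define (x(t), y(t)) = (x₀, y₀) + ∫₀ᵗ v(τ)·(cos(φ(τ)), sin(φ(τ))) dτ, and set κ̆ = κ̄T/(2π). Suppose κ̆ is not an integer (so sin(πκ̆) ≠ 0). Then the point (x̄, ȳ) = (x(0), y(0)) + (1/(2 sin(πκ̆)))·R_{π(1/2 − κ̆)}( (x(T), y(T)) − (x(0), y(0)) ) is a fixed point of the congruence G(p) = ( (x(T), y(T)) − R_{2πκ̆}(x(0), y(0)) ) + R_{2πκ̆}(p); hence G is the rotation by angle 2πκ̆ about the point (x̄, ȳ). -/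
open Real

/-- Rotation of the plane ℝ² by angle θ:
`R_θ(x,y) = (x cos θ − y sin θ, x sin θ + y cos θ)`. -/
noncomputable def rot (θ : ℝ) (p : ℝ × ℝ) : ℝ × ℝ :=
  (p.1 * Real.cos θ - p.2 * Real.sin θ, p.1 * Real.sin θ + p.2 * Real.cos θ)

lemma rot_add' (θ : ℝ) (p q : ℝ × ℝ) : rot θ (p + q) = rot θ p + rot θ q := by
  simp only [rot, Prod.mk_add_mk, Prod.fst_add, Prod.snd_add, Prod.mk.injEq]
  constructor <;> ring

lemma rot_sub' (θ : ℝ) (p q : ℝ × ℝ) : rot θ (p - q) = rot θ p - rot θ q := by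
  simp only [rot, Prod.mk_sub_mk, Prod.fst_sub, Prod.snd_sub, Prod.mk.injEq]
  constructor <;> ring

lemma rot_smul' (θ : ℝ) (r : ℝ) (p : ℝ × ℝ) : rot θ (r • p) = r • rot θ p := by
  simp only [rot, Prod.smul_mk, Prod.smul_fst, Prod.smul_snd, smul_eq_mul, Prod.mk.injEq]
  constructor <;> ring

lemma rot_rot' (α β : ℝ) (p : ℝ × ℝ) : rot α (rot β p) = rot (α + β) p := by
  simp only [rot, Real.cos_add, Real.sin_add, Prod.mk.injEq]
  constructor <;> ring

theorem congruence_is_rotation_about_center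
    (T κbar x₀ y₀ : ℝ) (hT : 0 < T)
    (φtil : ℝ → ℝ) (hper : ∀ t : ℝ, φtil (t + T) = φtil t)
    (φ : ℝ → ℝ) (hφ : ∀ t : ℝ, φ t = κbar * t + φtil t)
    (v : ℝ → ℝ) (hv : Continuous v) (hvper : ∀ t : ℝ, v (t + T) = v t)
    (x y : ℝ → ℝ)
    (hx : ∀ t : ℝ, x t = x₀ + ∫ τ in (0:ℝ)..t, v τ * Real.cos (φ τ))
    (hy : ∀ t : ℝ, y t = y₀ + ∫ τ in (0:ℝ)..t, v τ * Real.sin (φ τ))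
    (κ : ℝ) (hκ : κ = κbar * T / (2 * Real.pi))
    (hκZ : ¬ ∃ m : ℤ, κ = (m : ℝ))
    (c : ℝ × ℝ)
    (hc : c = ((x 0, y 0) : ℝ × ℝ)
        + (1 / (2 * Real.sin (Real.pi * κ)))
            • rot (Real.pi * (1 / 2 - κ)) (((x T, y T) : ℝ × ℝ) - (x 0, y 0)))
    (G : ℝ × ℝ → ℝ × ℝ)
    (hG : ∀ p : ℝ × ℝ,
      G p = (((x T, y T) : ℝ × ℝ) - rot (2 * Real.pi * κ) (x 0, y 0))
              + rot (2 * Real.pi * κ) p) :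
    G c = c ∧ ∀ p : ℝ × ℝ, G p = c + rot (2 * Real.pi * κ) (p - c) := by
  have hs : Real.sin (Real.pi * κ) ≠ 0 := by
    intro h
    rcases Real.sin_eq_zero_iff.mp h with ⟨n, hn⟩
    exact hκZ ⟨n, (mul_left_cancel₀ Real.pi_ne_zero (by linarith)).symm⟩
  set p0 : ℝ × ℝ := (x 0, y 0) with hp0
  set pT : ℝ × ℝ := (x T, y T) with hpT
  set d : ℝ × ℝ := pT - p0 with hd
  set a : ℝ := Real.pi * (1 / 2 - κ) with ha
  set C : ℝ := 2 * Real.pi * κ with hC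
  have hkey : rot a d - rot (C + a) d = (2 * Real.sin (Real.pi * κ)) • d := by
    have e1 : a = Real.pi / 2 - Real.pi * κ := by rw [ha]; ring
    have e2 : C + a = Real.pi / 2 + Real.pi * κ := by rw [hC, ha]; ring
    rw [e2, e1]
    apply Prod.ext <;>
      simp only [rot, Real.cos_pi_div_two_sub, Real.sin_pi_div_two_sub, Real.cos_add,
        Real.sin_add, Real.cos_pi_div_two, Real.sin_pi_div_two, Prod.fst_sub, Prod.snd_sub,
        Prod.smul_fst, Prod.smul_snd, smul_eq_mul] <;>
      ring
  have hsd : (1 / (2 * Real.sin (Real.pi * κ))) • ((2 * Real.sin (Real.pi * κ)) • d) = d := by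
    rw [smul_smul, one_div_mul_cancel (by positivity : (2 * Real.sin (Real.pi * κ)) ≠ 0),
      one_smul]
  have H : c - rot C c = pT - rot C p0 := by
    rw [hc, rot_add', rot_smul', rot_rot']
    rw [sub_eq_iff_eq_add] at hkey
    rw [hkey, smul_add, hsd]
    rw [hd]
    abel
  constructor
  · rw [hG, ← H]; abel
  · intro p
    rw [hG, rot_sub', ← H]
    abel
end

section
/- Let r₁, r₂ > 0 and ω₁ > 0, ω₂ ∈ ℝ with ω₂ ≠ 0 and ω₂ ≠ ω₁, and suppose |ω₂| r₂ < ω₁ r₁ (the curtate case, arm ratio ρ = |ω₂/ω₁|·(r₂/r₁) < 1). Let (x(t), y(t)) = (r₁ cos(ω₁ t) + r₂ cos(ω₂ t), r₁ sin(ω₁ t) + r₂ sin(ω₂ t)) and T = 2π/|ω₂ − ω₁|. Then the turning number of a periodic arc is κ̆ = (1/(2π)) ∫₀ᵀ (ẋ(τ)ÿ(τ) − ẏ(τ)ẍ(τ)) / (ẋ(τ)² + ẏ(τ)²) dτ = ω₁/|ω₂ − ω₁|. (Equivalently, with χ = ω₁/ω₂: κ̆ = χ/(χ−1) for curtate hypotrochoids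 (χ<0) and peritrochoids (χ>1), and κ̆ = χ/(1−χ) for curtate epitrochoids (0<χ<1).) -/
open Real

/-!
With `a = r₁ω₁`, `b = r₂ω₂` and `Δ = ω₂ - ω₁`, the velocity is `ẋ + iẏ = i e^{iω₁t} (a + b e^{iΔt})`,
so the tangent angle is `ω₁t + π/2 + arg (a + b e^{iΔt})`. In the curtate case `|b| < a` the factor
`a + b e^{iΔt}` stays in the right half-plane, so its argument is the smooth `T`-periodic function
`arctan (b sin Δt / (a + b cos Δt))`; integrating the turning rate over a period leaves only `ω₁T`.
-/

theorem HasDerivAt.arctan_div {f g : ℝ → ℝ} {f' g' t : ℝ} (hf : HasDerivAt f f' t)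
    (hg : HasDerivAt g g' t) (hg₀ : g t ≠ 0) :
    HasDerivAt (fun s => Real.arctan (f s / g s))
      ((g t * f' - f t * g') / (g t ^ 2 + f t ^ 2)) t := by
  refine (hf.div hg hg₀).arctan.congr_deriv ?_
  simp only [Pi.div_apply]
  field_simp

theorem Function.Periodic.comp_const_mul_div_abs {α : Type*} {f : ℝ → α} {c : ℝ}
    (h : Function.Periodic f c) (Δ : ℝ) : Function.Periodic (fun t => f (Δ * t)) (c / |Δ|) := by
  rcases abs_cases Δ with ⟨hΔ, -⟩ | ⟨hΔ, -⟩
  · simpa [hΔ, div_eq_inv_mul] using h.const_mul Δ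
  · simpa [hΔ, div_eq_inv_mul] using (h.const_mul Δ).neg

theorem Function.Periodic.integral_deriv_eq_zero {φ f : ℝ → ℝ} {T : ℝ}
    (hφ : Function.Periodic φ T) (hderiv : ∀ t, HasDerivAt φ (f t) t) (a : ℝ)
    (hf : IntervalIntegrable f MeasureTheory.volume a (a + T)) :
    ∫ t in a..a + T, f t = 0 := by
  rw [intervalIntegral.integral_eq_sub_of_hasDerivAt (fun t _ => hderiv t) hf, hφ, sub_self]

theorem sq_add_sq_add_two_mul_cos_eq (a b θ : ℝ) :
    a ^ 2 + b ^ 2 + 2 * a * b * cos θ = (a + b * cos θ) ^ 2 + (b * sin θ) ^ 2 := by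
  linear_combination (-b ^ 2) * sin_sq_add_cos_sq θ

section Epicycle

variable {a b : ℝ}

theorem add_mul_cos_pos (h : |b| < a) (θ : ℝ) : 0 < a + b * cos θ := by
  have : |b * cos θ| ≤ |b| := by
    rw [abs_mul]
    exact mul_le_of_le_one_right (abs_nonneg b) (abs_cos_le_one θ)
  linarith [neg_abs_le (b * cos θ)]

theorem sq_add_sq_add_two_mul_cos_pos (h : |b| < a) (θ : ℝ) :
    0 < a ^ 2 + b ^ 2 + 2 * a * b * cos θ := by
  rw [sq_add_sq_add_two_mul_cos_eq]
  have := add_mul_cos_pos h θ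
  positivity

/-- The argument of `a + b e^{iθ}` when `|b| < a`. -/
noncomputable def epicycleAngle (a b θ : ℝ) : ℝ := arctan (b * sin θ / (a + b * cos θ))

theorem epicycleAngle_periodic (a b : ℝ) : Function.Periodic (epicycleAngle a b) (2 * π) := by
  intro θ
  simp only [epicycleAngle, sin_add_two_pi, cos_add_two_pi]

theorem hasDerivAt_epicycleAngle (h : |b| < a) (θ : ℝ) :
    HasDerivAt (epicycleAngle a b)
      (b * (b + a * cos θ) / (a ^ 2 + b ^ 2 + 2 * a * b * cos θ)) θ := by
  refine (HasDerivAt.arctan_div ((hasDerivAt_sin θ).const_mul b)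
    (((hasDerivAt_cos θ).const_mul b).const_add a) (add_mul_cos_pos h θ).ne').congr_deriv ?_
  rw [sq_add_sq_add_two_mul_cos_eq]
  congr 1
  linear_combination b ^ 2 * sin_sq_add_cos_sq θ

theorem integral_const_add_epicycleAngle_deriv (h : |b| < a) (c Δ : ℝ) :
    ∫ t in (0)..2 * π / |Δ|,
      (c + b * (b + a * cos (Δ * t)) / (a ^ 2 + b ^ 2 + 2 * a * b * cos (Δ * t)) * Δ)
      = c * (2 * π / |Δ|) := by
  have hψ (t : ℝ) := (hasDerivAt_epicycleAngle h (Δ * t)).comp t (hasDerivAt_const_mul Δ)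
  have hψ' : IntervalIntegrable
      (fun t => b * (b + a * cos (Δ * t)) / (a ^ 2 + b ^ 2 + 2 * a * b * cos (Δ * t)) * Δ)
      MeasureTheory.volume 0 (2 * π / |Δ|) :=
    ((Continuous.div (by fun_prop) (by fun_prop) fun t =>
      (sq_add_sq_add_two_mul_cos_pos h (Δ * t)).ne').mul continuous_const).intervalIntegrable _ _
  have hψ_period :=
    ((epicycleAngle_periodic a b).comp_const_mul_div_abs Δ).integral_deriv_eq_zero hψ 0
  rw [zero_add] at hψ_period
  rw [intervalIntegral.integral_add intervalIntegrable_const hψ', hψ_period hψ',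
    intervalIntegral.integral_const, smul_eq_mul, sub_zero, add_zero, mul_comm]

end Epicycle

theorem deriv_mul_cos_add_mul_cos (r₁ r₂ ω₁ ω₂ : ℝ) :
    deriv (fun t => r₁ * cos (ω₁ * t) + r₂ * cos (ω₂ * t))
      = fun t => -(r₁ * ω₁) * sin (ω₁ * t) + -(r₂ * ω₂) * sin (ω₂ * t) := by
  funext t
  exact ((((hasDerivAt_const_mul ω₁).cos).const_mul r₁).add
    (((hasDerivAt_const_mul ω₂).cos).const_mul r₂)).congr_deriv (by ring) |>.deriv

theorem deriv_mul_sin_add_mul_sin (r₁ r₂ ω₁ ω₂ : ℝ) :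
    deriv (fun t => r₁ * sin (ω₁ * t) + r₂ * sin (ω₂ * t))
      = fun t => r₁ * ω₁ * cos (ω₁ * t) + r₂ * ω₂ * cos (ω₂ * t) := by
  funext t
  exact ((((hasDerivAt_const_mul ω₁).sin).const_mul r₁).add
    (((hasDerivAt_const_mul ω₂).sin).const_mul r₂)).congr_deriv (by ring) |>.deriv

theorem epicycle_turning_integrand {a b ω₁ ω₂ t : ℝ}
    (hD : a ^ 2 + b ^ 2 + 2 * a * b * cos ((ω₂ - ω₁) * t) ≠ 0) :
    ((-a * sin (ω₁ * t) + -b * sin (ω₂ * t))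
          * (-(a * ω₁) * sin (ω₁ * t) + -(b * ω₂) * sin (ω₂ * t))
        - (a * cos (ω₁ * t) + b * cos (ω₂ * t))
          * (-a * ω₁ * cos (ω₁ * t) + -b * ω₂ * cos (ω₂ * t)))
      / ((-a * sin (ω₁ * t) + -b * sin (ω₂ * t)) ^ 2 + (a * cos (ω₁ * t) + b * cos (ω₂ * t)) ^ 2)
    = ω₁ + b * (b + a * cos ((ω₂ - ω₁) * t))
        / (a ^ 2 + b ^ 2 + 2 * a * b * cos ((ω₂ - ω₁) * t)) * (ω₂ - ω₁) := by
  set D := a ^ 2 + b ^ 2 + 2 * a * b * cos ((ω₂ - ω₁) * t)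
  have hcos : cos ((ω₂ - ω₁) * t)
      = cos (ω₂ * t) * cos (ω₁ * t) + sin (ω₂ * t) * sin (ω₁ * t) := by
    rw [sub_mul, cos_sub]
  have hspeed : (-a * sin (ω₁ * t) + -b * sin (ω₂ * t)) ^ 2
      + (a * cos (ω₁ * t) + b * cos (ω₂ * t)) ^ 2 = D := by
    linear_combination a ^ 2 * sin_sq_add_cos_sq (ω₁ * t) + b ^ 2 * sin_sq_add_cos_sq (ω₂ * t)
      - 2 * a * b * hcos
  have hcross : (-a * sin (ω₁ * t) + -b * sin (ω₂ * t))
          * (-(a * ω₁) * sin (ω₁ * t) + -(b * ω₂) * sin (ω₂ * t))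
        - (a * cos (ω₁ * t) + b * cos (ω₂ * t))
          * (-a * ω₁ * cos (ω₁ * t) + -b * ω₂ * cos (ω₂ * t))
      = ω₁ * D + b * (b + a * cos ((ω₂ - ω₁) * t)) * (ω₂ - ω₁) := by
    linear_combination a ^ 2 * ω₁ * sin_sq_add_cos_sq (ω₁ * t)
      + b ^ 2 * ω₂ * sin_sq_add_cos_sq (ω₂ * t) - a * b * (ω₁ + ω₂) * hcos
  rw [hspeed, hcross, add_div, mul_div_cancel_right₀ _ hD, div_mul_eq_mul_div]

theorem curtate_trochoid_turning_number_general
    (r₁ r₂ ω₁ ω₂ : ℝ) (hr₂ : 0 < r₂)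
    (hcurt : |ω₂| * r₂ < ω₁ * r₁)
    (x y : ℝ → ℝ)
    (hx : ∀ t : ℝ, x t = r₁ * Real.cos (ω₁ * t) + r₂ * Real.cos (ω₂ * t))
    (hy : ∀ t : ℝ, y t = r₁ * Real.sin (ω₁ * t) + r₂ * Real.sin (ω₂ * t))
    (T : ℝ) (hT : T = 2 * Real.pi / |ω₂ - ω₁|) :
    (1 / (2 * Real.pi)) *
        ∫ τ in (0:ℝ)..T,
          (deriv x τ * deriv (deriv y) τ - deriv y τ * deriv (deriv x) τ)
            / ((deriv x τ) ^ 2 + (deriv y τ) ^ 2)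
      = ω₁ / |ω₂ - ω₁| := by
  obtain rfl : x = _ := funext hx
  obtain rfl : y = _ := funext hy
  subst hT
  have hb : |r₂ * ω₂| < r₁ * ω₁ := by rw [abs_mul, abs_of_pos hr₂]; linarith
  have hD (θ : ℝ) := (sq_add_sq_add_two_mul_cos_pos hb θ).ne'
  simp only [deriv_mul_cos_add_mul_cos, deriv_mul_sin_add_mul_sin,
    epicycle_turning_integrand (hD _), integral_const_add_epicycleAngle_deriv hb]
  field_simp

theorem curtate_trochoid_turning_number
    (r₁ r₂ ω₁ ω₂ : ℝ) (hr₁ : 0 < r₁) (hr₂ : 0 < r₂)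
    (hω₁ : 0 < ω₁) (hω₂ : ω₂ ≠ 0) (hne : ω₂ ≠ ω₁)
    (hcurt : |ω₂| * r₂ < ω₁ * r₁)
    (x y : ℝ → ℝ)
    (hx : ∀ t : ℝ, x t = r₁ * Real.cos (ω₁ * t) + r₂ * Real.cos (ω₂ * t))
    (hy : ∀ t : ℝ, y t = r₁ * Real.sin (ω₁ * t) + r₂ * Real.sin (ω₂ * t))
    (T : ℝ) (hT : T = 2 * Real.pi / |ω₂ - ω₁|) :
    (1 / (2 * Real.pi)) *
        ∫ τ in (0:ℝ)..T,
          (deriv x τ * deriv (deriv y) τ - deriv y τ * deriv (deriv x) τ)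
            / ((deriv x τ) ^ 2 + (deriv y τ) ^ 2)
      = ω₁ / |ω₂ - ω₁| :=
  curtate_trochoid_turning_number_general r₁ r₂ ω₁ ω₂ hr₂ hcurt x y hx hy T hT
end

section
/- Let r₁, r₂ > 0 and ω₁ > 0, ω₂ ∈ ℝ with ω₂ ≠ 0 and ω₂ ≠ ω₁, and suppose |ω₂| r₂ > ω₁ r₁ (the prolate case, arm ratio ρ = |ω₂/ω₁|·(r₂/r₁) > 1). Let (x(t), y(t)) = (r₁ cos(ω₁ t) + r₂ cos(ω₂ t), r₁ sin(ω₁ t) + r₂ sin(ω₂ t)) and T = 2π/|ω₂ − ω₁|. Then the turning number of a periodic arc is κ̆ = (1/(2π)) ∫₀ᵀ (ẋ(τ)ÿ(τ) − ẏ(τ)ẍ(τ)) / (ẋ(τ)² + ẏ(τ)²) dτ = ω₂/|ω₂ − ω₁|. (Equivalently, with χ = ω₁/ω₂: κ̆ = 1/(χ−1) for prolate hypotrochoids (χ<0) and peritrochoids (χ>1), and κ̆ = 1/(1−χ) for prolate epitrochoids (0<χ<1).) -/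
/-! With `a = r₁ ω₁` and `b = r₂ ω₂` the velocity of the trochoid is
`i e^{iω₂t} (b + a e^{-i(ω₂-ω₁)t})`. In the prolate case `|a| < |b|`, so the second factor never
leaves the half-plane `b · Re > 0`, and `ω₂ t - arctan (a sin ((ω₂-ω₁)t) / (b + a cos ((ω₂-ω₁)t)))`
is a continuous tangent angle up to the constant `π/2`. The turning density is its derivative, and
over one period `T = 2π/|ω₂ - ω₁|` the arctan term returns to its initial value, so the total
turning is `ω₂ T`. -/

open Real

noncomputable section

def turningDensity (x y : ℝ → ℝ) (t : ℝ) : ℝ :=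
  (deriv x t * deriv (deriv y) t - deriv y t * deriv (deriv x) t) / (deriv x t ^ 2 + deriv y t ^ 2)

section Trochoid

variable (r₁ r₂ ω₁ ω₂ : ℝ)

def trochoidX (t : ℝ) : ℝ := r₁ * cos (ω₁ * t) + r₂ * cos (ω₂ * t)

def trochoidY (t : ℝ) : ℝ := r₁ * sin (ω₁ * t) + r₂ * sin (ω₂ * t)

theorem hasDerivAt_trochoidX (t : ℝ) :
    HasDerivAt (trochoidX r₁ r₂ ω₁ ω₂) (-trochoidY (r₁ * ω₁) (r₂ * ω₂) ω₁ ω₂ t) t := by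
  have h₁ := ((hasDerivAt_id' t).const_mul ω₁).cos.const_mul r₁
  have h₂ := ((hasDerivAt_id' t).const_mul ω₂).cos.const_mul r₂
  refine (h₁.add h₂).congr_deriv ?_
  simp only [trochoidY]
  ring

theorem hasDerivAt_trochoidY (t : ℝ) :
    HasDerivAt (trochoidY r₁ r₂ ω₁ ω₂) (trochoidX (r₁ * ω₁) (r₂ * ω₂) ω₁ ω₂ t) t := by
  have h₁ := ((hasDerivAt_id' t).const_mul ω₁).sin.const_mul r₁
  have h₂ := ((hasDerivAt_id' t).const_mul ω₂).sin.const_mul r₂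
  refine (h₁.add h₂).congr_deriv ?_
  simp only [trochoidX]
  ring

theorem deriv_trochoidX :
    deriv (trochoidX r₁ r₂ ω₁ ω₂) = -trochoidY (r₁ * ω₁) (r₂ * ω₂) ω₁ ω₂ :=
  funext fun t => (hasDerivAt_trochoidX r₁ r₂ ω₁ ω₂ t).deriv

theorem deriv_trochoidY :
    deriv (trochoidY r₁ r₂ ω₁ ω₂) = trochoidX (r₁ * ω₁) (r₂ * ω₂) ω₁ ω₂ :=
  funext fun t => (hasDerivAt_trochoidY r₁ r₂ ω₁ ω₂ t).deriv

theorem trochoidY_mul_add_trochoidX_mul (q₁ q₂ t : ℝ) :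
    trochoidY r₁ r₂ ω₁ ω₂ t * trochoidY q₁ q₂ ω₁ ω₂ t
        + trochoidX r₁ r₂ ω₁ ω₂ t * trochoidX q₁ q₂ ω₁ ω₂ t
      = r₁ * q₁ + r₂ * q₂ + (r₁ * q₂ + r₂ * q₁) * cos ((ω₂ - ω₁) * t) := by
  rw [sub_mul, cos_sub]
  simp only [trochoidX, trochoidY]
  linear_combination r₁ * q₁ * sin_sq_add_cos_sq (ω₁ * t) + r₂ * q₂ * sin_sq_add_cos_sq (ω₂ * t)

theorem turningDensity_trochoid (t : ℝ) :
    turningDensity (trochoidX r₁ r₂ ω₁ ω₂) (trochoidY r₁ r₂ ω₁ ω₂) t =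
      ((r₁ * ω₁) ^ 2 * ω₁ + (r₂ * ω₂) ^ 2 * ω₂
          + (r₁ * ω₁) * (r₂ * ω₂) * (ω₁ + ω₂) * cos ((ω₂ - ω₁) * t)) /
        ((r₁ * ω₁) ^ 2 + (r₂ * ω₂) ^ 2 + 2 * (r₁ * ω₁) * (r₂ * ω₂) * cos ((ω₂ - ω₁) * t)) := by
  have hnum :=
    trochoidY_mul_add_trochoidX_mul (r₁ * ω₁) (r₂ * ω₂) ω₁ ω₂ (r₁ * ω₁ * ω₁) (r₂ * ω₂ * ω₂) t
  have hden := trochoidY_mul_add_trochoidX_mul (r₁ * ω₁) (r₂ * ω₂) ω₁ ω₂ (r₁ * ω₁) (r₂ * ω₂) t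
  simp only [turningDensity, deriv_trochoidX, deriv_trochoidY, deriv.neg, Pi.neg_apply]
  congr 1
  · linear_combination hnum
  · linear_combination hden

end Trochoid

theorem add_mul_cos_sq_add_mul_sin_sq (a b θ : ℝ) :
    (b + a * cos θ) ^ 2 + (a * sin θ) ^ 2 = a ^ 2 + b ^ 2 + 2 * a * b * cos θ := by
  linear_combination a ^ 2 * sin_sq_add_cos_sq θ

theorem sq_add_sq_add_two_mul_mul_cos_ne_zero {a b θ : ℝ} (h : b + a * cos θ ≠ 0) :
    a ^ 2 + b ^ 2 + 2 * a * b * cos θ ≠ 0 := by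
  rw [← add_mul_cos_sq_add_mul_sin_sq]
  exact (add_pos_of_pos_of_nonneg (by positivity) (sq_nonneg _)).ne'

theorem add_mul_cos_ne_zero {a b : ℝ} (h : |a| < |b|) (θ : ℝ) : b + a * cos θ ≠ 0 := by
  intro h0
  have : |b| ≤ |a| := by
    rw [eq_neg_of_add_eq_zero_left h0, abs_neg, abs_mul]
    exact mul_le_of_le_one_right (abs_nonneg a) (abs_cos_le_one θ)
  linarith

theorem hasDerivAt_arctan_mul_sin_div {a b θ : ℝ} (h : b + a * cos θ ≠ 0) :
    HasDerivAt (fun θ => arctan (a * sin θ / (b + a * cos θ)))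
      (a * (a + b * cos θ) / (a ^ 2 + b ^ 2 + 2 * a * b * cos θ)) θ := by
  have hN := (hasDerivAt_sin θ).const_mul a
  have hD := ((hasDerivAt_cos θ).const_mul a).const_add b
  refine (hN.div hD h).arctan.congr_deriv ?_
  rw [Pi.div_apply, ← add_mul_cos_sq_add_mul_sin_sq]
  field_simp
  linear_combination a ^ 2 * sin_sq_add_cos_sq θ

def trochoidTangentAngle (a b ω₁ ω₂ t : ℝ) : ℝ :=
  ω₂ * t - arctan (a * sin ((ω₂ - ω₁) * t) / (b + a * cos ((ω₂ - ω₁) * t)))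

theorem hasDerivAt_trochoidTangentAngle {a b : ℝ} (ω₁ ω₂ : ℝ) {t : ℝ}
    (h : b + a * cos ((ω₂ - ω₁) * t) ≠ 0) :
    HasDerivAt (trochoidTangentAngle a b ω₁ ω₂)
      ((a ^ 2 * ω₁ + b ^ 2 * ω₂ + a * b * (ω₁ + ω₂) * cos ((ω₂ - ω₁) * t)) /
        (a ^ 2 + b ^ 2 + 2 * a * b * cos ((ω₂ - ω₁) * t))) t := by
  have hK := sq_add_sq_add_two_mul_mul_cos_ne_zero h
  have hφ := (hasDerivAt_arctan_mul_sin_div h).comp t ((hasDerivAt_id' t).const_mul (ω₂ - ω₁))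
  refine (((hasDerivAt_id' t).const_mul ω₂).sub hφ).congr_deriv ?_
  generalize cos ((ω₂ - ω₁) * t) = c at hK ⊢
  rw [div_mul_eq_mul_div, eq_div_iff hK, sub_mul, div_mul_cancel₀ _ hK]
  ring

theorem sin_mul_two_pi_div_abs (Δ : ℝ) : sin (Δ * (2 * π / |Δ|)) = 0 := by
  rcases lt_trichotomy Δ 0 with hΔ | rfl | hΔ
  · have : Δ * (2 * π / |Δ|) = -(2 * π) := by
      rw [abs_of_neg hΔ]
      field_simp [hΔ.ne]
    rw [this, sin_neg, sin_two_pi, neg_zero]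
  · simp
  · have : Δ * (2 * π / |Δ|) = 2 * π := by
      rw [abs_of_pos hΔ]
      field_simp
    rw [this, sin_two_pi]

theorem trochoidTangentAngle_zero (a b ω₁ ω₂ : ℝ) : trochoidTangentAngle a b ω₁ ω₂ 0 = 0 := by
  simp [trochoidTangentAngle]

theorem trochoidTangentAngle_period (a b ω₁ ω₂ : ℝ) :
    trochoidTangentAngle a b ω₁ ω₂ (2 * π / |ω₂ - ω₁|) = ω₂ * (2 * π / |ω₂ - ω₁|) := by
  simp [trochoidTangentAngle, sin_mul_two_pi_div_abs]

theorem integral_turningDensity_trochoid {r₁ r₂ ω₁ ω₂ : ℝ} (h : |r₁ * ω₁| < |r₂ * ω₂|) :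
    ∫ t in (0 : ℝ)..2 * π / |ω₂ - ω₁|,
        turningDensity (trochoidX r₁ r₂ ω₁ ω₂) (trochoidY r₁ r₂ ω₁ ω₂) t
      = ω₂ * (2 * π / |ω₂ - ω₁|) := by
  have hne := add_mul_cos_ne_zero h
  have hderiv (t : ℝ) : HasDerivAt (trochoidTangentAngle (r₁ * ω₁) (r₂ * ω₂) ω₁ ω₂)
      (turningDensity (trochoidX r₁ r₂ ω₁ ω₂) (trochoidY r₁ r₂ ω₁ ω₂) t) t := by
    rw [turningDensity_trochoid]
    exact hasDerivAt_trochoidTangentAngle ω₁ ω₂ (hne _)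
  have hcont : Continuous (turningDensity (trochoidX r₁ r₂ ω₁ ω₂) (trochoidY r₁ r₂ ω₁ ω₂)) := by
    rw [funext (turningDensity_trochoid r₁ r₂ ω₁ ω₂)]
    exact Continuous.div (by fun_prop) (by fun_prop)
      fun t => sq_add_sq_add_two_mul_mul_cos_ne_zero (hne _)
  rw [intervalIntegral.integral_eq_sub_of_hasDerivAt (fun t _ => hderiv t)
    (hcont.intervalIntegrable _ _), trochoidTangentAngle_period, trochoidTangentAngle_zero, sub_zero]

end

theorem prolate_trochoid_turning_number_general
    (r₁ r₂ ω₁ ω₂ : ℝ) (hr₁ : 0 < r₁) (hr₂ : 0 < r₂)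
    (hω₁ : 0 < ω₁)
    (hprol : ω₁ * r₁ < |ω₂| * r₂)
    (x y : ℝ → ℝ)
    (hx : ∀ t : ℝ, x t = r₁ * Real.cos (ω₁ * t) + r₂ * Real.cos (ω₂ * t))
    (hy : ∀ t : ℝ, y t = r₁ * Real.sin (ω₁ * t) + r₂ * Real.sin (ω₂ * t))
    (T : ℝ) (hT : T = 2 * Real.pi / |ω₂ - ω₁|) :
    (1 / (2 * Real.pi)) *
        ∫ τ in (0:ℝ)..T,
          (deriv x τ * deriv (deriv y) τ - deriv y τ * deriv (deriv x) τ)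
            / ((deriv x τ) ^ 2 + (deriv y τ) ^ 2)
      = ω₂ / |ω₂ - ω₁| := by
  obtain rfl : x = trochoidX r₁ r₂ ω₁ ω₂ := funext hx
  obtain rfl : y = trochoidY r₁ r₂ ω₁ ω₂ := funext hy
  have harm : |r₁ * ω₁| < |r₂ * ω₂| := by
    rw [abs_of_pos (mul_pos hr₁ hω₁), abs_mul, abs_of_pos hr₂]
    linarith
  change 1 / (2 * π) * ∫ τ in (0 : ℝ)..T, turningDensity _ _ τ = _
  rw [hT, integral_turningDensity_trochoid harm]
  field_simp

theorem prolate_trochoid_turning_number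
    (r₁ r₂ ω₁ ω₂ : ℝ) (hr₁ : 0 < r₁) (hr₂ : 0 < r₂)
    (hω₁ : 0 < ω₁) (hω₂ : ω₂ ≠ 0) (hne : ω₂ ≠ ω₁)
    (hprol : ω₁ * r₁ < |ω₂| * r₂)
    (x y : ℝ → ℝ)
    (hx : ∀ t : ℝ, x t = r₁ * Real.cos (ω₁ * t) + r₂ * Real.cos (ω₂ * t))
    (hy : ∀ t : ℝ, y t = r₁ * Real.sin (ω₁ * t) + r₂ * Real.sin (ω₂ * t))
    (T : ℝ) (hT : T = 2 * Real.pi / |ω₂ - ω₁|) :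
    (1 / (2 * Real.pi)) *
        ∫ τ in (0:ℝ)..T,
          (deriv x τ * deriv (deriv y) τ - deriv y τ * deriv (deriv x) τ)
            / ((deriv x τ) ^ 2 + (deriv y τ) ^ 2)
      = ω₂ / |ω₂ - ω₁| :=
  prolate_trochoid_turning_number_general r₁ r₂ ω₁ ω₂ hr₁ hr₂ hω₁ hprol x y hx hy T hT
end

section
/- Let h ≥ −1. For all u ∈ [−1, 1] and all w ∈ ℝ, 2(h − u)(1 − u²) − w² ≤ (4/27)·((h² + 3)^{3/2} − h³ + 9h), with equality when w = 0 and u = (h − √(h² + 3))/3. Consequently, the maximum possible value of the nondimensionalized vertical angular momentum j of the spherical pendulum at energy h is j_max = (2/9)·√(3·((h² + 3)^{3/2} − h³ + 9h)), and the minimum is −j_max. -/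
open Real

theorem spherical_pendulum_jmax
    (h : ℝ) (hh : -1 ≤ h) :
    (∀ u ∈ Set.Icc (-1 : ℝ) 1, ∀ w : ℝ,
      2 * (h - u) * (1 - u ^ 2) - w ^ 2
        ≤ (4 / 27) * ((h ^ 2 + 3) * Real.sqrt (h ^ 2 + 3) - h ^ 3 + 9 * h)) ∧
    (2 * (h - (h - Real.sqrt (h ^ 2 + 3)) / 3)
        * (1 - ((h - Real.sqrt (h ^ 2 + 3)) / 3) ^ 2) - 0 ^ 2
      = (4 / 27) * ((h ^ 2 + 3) * Real.sqrt (h ^ 2 + 3) - h ^ 3 + 9 * h)) ∧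
    (∀ u ∈ Set.Icc (-1 : ℝ) 1, ∀ w j : ℝ,
      j ^ 2 = 2 * (h - u) * (1 - u ^ 2) - w ^ 2 →
      -((2 / 9) * Real.sqrt (3 * ((h ^ 2 + 3) * Real.sqrt (h ^ 2 + 3) - h ^ 3 + 9 * h))) ≤ j ∧
        j ≤ (2 / 9) * Real.sqrt (3 * ((h ^ 2 + 3) * Real.sqrt (h ^ 2 + 3) - h ^ 3 + 9 * h))) := by
  set s := Real.sqrt (h ^ 2 + 3) with hsdef
  have hs0 : 0 ≤ s := Real.sqrt_nonneg _
  have hs : s ^ 2 = h ^ 2 + 3 := Real.sq_sqrt (by positivity)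
  -- key side facts
  have hB : 3 - h ≤ 2 * s := by nlinarith [sq_nonneg (h + 1), sq_nonneg (2 * s - (3 - h))]
  have key : ∀ u ∈ Set.Icc (-1 : ℝ) 1, ∀ w : ℝ,
      2 * (h - u) * (1 - u ^ 2) - w ^ 2
        ≤ (4 / 27) * ((h ^ 2 + 3) * s - h ^ 3 + 9 * h) := by
    intro u hu w
    obtain ⟨hu1, hu2⟩ := hu
    have hBu : 0 ≤ h + 2 * s - 3 * u := by linarith
    have hA : 0 ≤ (3 * u - h + s) ^ 2 := sq_nonneg _
    nlinarith [mul_nonneg hA hBu, sq_nonneg w, hs, hs0]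
  have heq : 2 * (h - (h - s) / 3) * (1 - ((h - s) / 3) ^ 2) - 0 ^ 2
      = (4 / 27) * ((h ^ 2 + 3) * s - h ^ 3 + 9 * h) := by
    linear_combination (-(2 : ℝ) / 27 * s) * hs
  refine ⟨key, heq, ?_⟩
  -- nonnegativity of the max value
  have h2hs : 0 ≤ 2 * h + s := by nlinarith [sq_nonneg (h + 1), sq_nonneg (2 * h + s)]
  have hX : 0 ≤ (h ^ 2 + 3) * s - h ^ 3 + 9 * h := by
    nlinarith [h2hs, hs, hs0, sq_nonneg (h + 1), sq_nonneg (s - 2), sq_nonneg (h * s + 3),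
      mul_nonneg h2hs hs0, mul_nonneg (mul_nonneg h2hs h2hs) hs0]
  intro u hu w j hj
  have h1 := key u hu w
  have hjm : ((2 / 9) * Real.sqrt (3 * ((h ^ 2 + 3) * s - h ^ 3 + 9 * h))) ^ 2
      = (4 / 27) * ((h ^ 2 + 3) * s - h ^ 3 + 9 * h) := by
    rw [mul_pow, Real.sq_sqrt (by linarith)]
    ring
  have hj2 : j ^ 2 ≤ ((2 / 9) * Real.sqrt (3 * ((h ^ 2 + 3) * s - h ^ 3 + 9 * h))) ^ 2 := by
    rw [hjm, hj]; exact h1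
  have habs : |j| ≤ (2 / 9) * Real.sqrt (3 * ((h ^ 2 + 3) * s - h ^ 3 + 9 * h)) := by
    have := Real.sqrt_le_sqrt hj2
    rwa [Real.sqrt_sq_eq_abs, Real.sqrt_sq (by positivity)] at this
  exact abs_le.mp habs
end

section
/- Let j, h ∈ ℝ and let u, w, ψ : ℝ → ℝ be functions with u(t) ∈ (−1, 1) for all t, u' = w, w' = 3u² − 2hu − 1, ψ' = j/(1 − u²), and (1/2)(w² + j²)/(1 − u²) + u = h for all t. Define x(t) = √(1 − u(t)²)·cos(ψ(t)) and y(t) = √(1 − u(t)²)·sin(ψ(t)). Then for all t, ẋ(t)·ÿ(t) − ẏ(t)·ẍ(t) = j·(2h − 3u(t)); hence the local curvature of the projected path is κ = j(2h − 3u)/v³ where v = √(2h − 2u − w²). -/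
/-!
In polar form with squared radius `P = 1 - u²` and angle `ψ`, the projected path is a curve
with conserved angular momentum `P ψ' = j`. For any polar curve `(r cos ψ, r sin ψ)` one has
`ẋÿ - ẏẍ = r²ψ'³ + 2r'²ψ' + r (r'ψ'' - r''ψ')`, which under `P ψ' = j` becomes
`j (P'²/4 - P P''/2 + j²) / P²`. For the pendulum `P' = -2uw` and `P'' = -2(w² + u w')`, and the
energy relation `w² + j² = 2(h - u) P` collapses this to `j (2h - 3u)`.
-/

open Real

section Polar

variable {r ψ r' ω : ℝ → ℝ}

theorem hasDerivAt_mul_cos_comp {t r₁ ω₁ : ℝ} (hr : HasDerivAt r r₁ t) (hψ : HasDerivAt ψ ω₁ t) :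
    HasDerivAt (fun s => r s * cos (ψ s)) (r₁ * cos (ψ t) - r t * ω₁ * sin (ψ t)) t :=
  (hr.mul hψ.cos).congr_deriv (by ring)

theorem hasDerivAt_mul_sin_comp {t r₁ ω₁ : ℝ} (hr : HasDerivAt r r₁ t) (hψ : HasDerivAt ψ ω₁ t) :
    HasDerivAt (fun s => r s * sin (ψ s)) (r₁ * sin (ψ t) + r t * ω₁ * cos (ψ t)) t :=
  (hr.mul hψ.sin).congr_deriv (by ring)

theorem polar_curvature_numerator {t r'' ω' : ℝ} (hr : ∀ s, HasDerivAt r (r' s) s)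
    (hψ : ∀ s, HasDerivAt ψ (ω s) s) (hr' : HasDerivAt r' r'' t) (hω : HasDerivAt ω ω' t) :
    deriv (fun s => r s * cos (ψ s)) t * deriv (deriv fun s => r s * sin (ψ s)) t
        - deriv (fun s => r s * sin (ψ s)) t * deriv (deriv fun s => r s * cos (ψ s)) t
      = r t ^ 2 * ω t ^ 3 + 2 * r' t ^ 2 * ω t + r t * (r' t * ω' - r'' * ω t) := by
  have hrω : HasDerivAt (fun s => r s * ω s) (r' t * ω t + r t * ω') t := (hr t).mul hω
  have dx : deriv (fun s => r s * cos (ψ s)) = fun s => r' s * cos (ψ s) - r s * ω s * sin (ψ s) :=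
    funext fun s => (hasDerivAt_mul_cos_comp (hr s) (hψ s)).deriv
  have dy : deriv (fun s => r s * sin (ψ s)) = fun s => r' s * sin (ψ s) + r s * ω s * cos (ψ s) :=
    funext fun s => (hasDerivAt_mul_sin_comp (hr s) (hψ s)).deriv
  have ddx : HasDerivAt (fun s => r' s * cos (ψ s) - r s * ω s * sin (ψ s))
      (r'' * cos (ψ t) - r' t * ω t * sin (ψ t)
        - ((r' t * ω t + r t * ω') * sin (ψ t) + r t * ω t * ω t * cos (ψ t))) t :=
    (hasDerivAt_mul_cos_comp hr' (hψ t)).sub (hasDerivAt_mul_sin_comp hrω (hψ t))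
  have ddy : HasDerivAt (fun s => r' s * sin (ψ s) + r s * ω s * cos (ψ s))
      (r'' * sin (ψ t) + r' t * ω t * cos (ψ t)
        + ((r' t * ω t + r t * ω') * cos (ψ t) - r t * ω t * ω t * sin (ψ t))) t :=
    (hasDerivAt_mul_sin_comp hr' (hψ t)).add (hasDerivAt_mul_cos_comp hrω (hψ t))
  rw [dx, dy, ddx.deriv, ddy.deriv]
  linear_combination (r t ^ 2 * ω t ^ 3 + 2 * r' t ^ 2 * ω t + r t * (r' t * ω' - r'' * ω t)) *
    sin_sq_add_cos_sq (ψ t)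

theorem polar_curvature_numerator_of_angular_momentum {P P' : ℝ → ℝ} {j t P'' : ℝ}
    (hP : ∀ s, HasDerivAt P (P' s) s) (hpos : ∀ s, 0 < P s)
    (hψ : ∀ s, HasDerivAt ψ (j / P s) s) (hP' : HasDerivAt P' P'' t) :
    deriv (fun s => √(P s) * cos (ψ s)) t * deriv (deriv fun s => √(P s) * sin (ψ s)) t
        - deriv (fun s => √(P s) * sin (ψ s)) t * deriv (deriv fun s => √(P s) * cos (ψ s)) t
      = j * (P' t ^ 2 / 4 - P t * P'' / 2 + j ^ 2) / P t ^ 2 := by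
  have hr : ∀ s, HasDerivAt (fun s => √(P s)) (P' s / (2 * √(P s))) s := fun s =>
    (hP s).sqrt (hpos s).ne'
  have hr' := hP'.div ((hr t).const_mul 2) (by positivity [hpos t])
  have hω := (hasDerivAt_const t j).div (hP t) (hpos t).ne'
  rw [polar_curvature_numerator hr hψ hr' hω]
  have hsq := sq_sqrt (hpos t).le
  field_simp [(hpos t).ne', (sqrt_pos.2 (hpos t)).ne']
  rw [hsq]
  linear_combination 16 * j ^ 3 * (√(P t) ^ 2 + P t) * hsq

end Polar

theorem spherical_pendulum_projected_curvature_numerator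
    (j h : ℝ) (u w ψ : ℝ → ℝ)
    (hrange : ∀ t : ℝ, u t ∈ Set.Ioo (-1 : ℝ) 1)
    (hu : ∀ t : ℝ, HasDerivAt u (w t) t)
    (hw : ∀ t : ℝ, HasDerivAt w (3 * (u t) ^ 2 - 2 * h * u t - 1) t)
    (hψ : ∀ t : ℝ, HasDerivAt ψ (j / (1 - (u t) ^ 2)) t)
    (henergy : ∀ t : ℝ,
      (1 / 2) * ((w t) ^ 2 + j ^ 2) / (1 - (u t) ^ 2) + u t = h)
    (x y : ℝ → ℝ)
    (hx : ∀ t : ℝ, x t = Real.sqrt (1 - (u t) ^ 2) * Real.cos (ψ t))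
    (hy : ∀ t : ℝ, y t = Real.sqrt (1 - (u t) ^ 2) * Real.sin (ψ t)) :
    ∀ t : ℝ,
      deriv x t * deriv (deriv y) t - deriv y t * deriv (deriv x) t
        = j * (2 * h - 3 * u t) := by
  intro t
  have hpos : ∀ s, 0 < 1 - u s ^ 2 := fun s => by
    obtain ⟨h₁, h₂⟩ := hrange s
    nlinarith
  have hP : ∀ s, HasDerivAt (fun s => 1 - u s ^ 2) (-2 * u s * w s) s := fun s =>
    (((hu s).pow 2).const_sub 1).congr_deriv (by ring)
  have hP' : HasDerivAt (fun s => -2 * u s * w s)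
      (-2 * (w t ^ 2 + u t * (3 * u t ^ 2 - 2 * h * u t - 1))) t :=
    (((hu t).const_mul (-2)).mul (hw t)).congr_deriv (by ring)
  have hE : w t ^ 2 + j ^ 2 = 2 * (h - u t) * (1 - u t ^ 2) := by
    have := henergy t
    field_simp [(hpos t).ne'] at this
    linarith
  rw [funext hx, funext hy, polar_curvature_numerator_of_angular_momentum hP hpos hψ hP']
  field_simp [(hpos t).ne']
  linear_combination 4 * j * hE
end

section
/- For all θ ∈ ℝ, |(16/π²)·arcsin(cos(θ/2))·arcsin(sin(θ/2)) − sin(θ)| ≤ 3.21·(π/180); i.e. the piecewise-quadratic spiral-easement approximation to sin differs from sin by never more than 3.21 degrees (in radians). -/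
/-!
On `[0, π]` the two arcsines are `π/2 - θ/2` and `θ/2`, so the approximation is the parabola
`4θ(π - θ)/π²`. Like `sin`, the approximation is antiperiodic with antiperiod `π`, and the parabola
is symmetric under `θ ↦ π - θ` just as `sin` is, so it suffices to compare the two on `[0, π/2]`.
There `sin` is squeezed between its Taylor polynomials of degrees 5 and 7, and after replacing `π`
by six-decimal bounds the remaining polynomial inequalities are certified by Bernstein expansions.
The bound is tight: the largest error, about `0.0560096` near `θ = 0.472`, is only `1.5 · 10⁻⁵`
below `3.21 · π/180`.
-/

open Real Finset
open scoped Nat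

theorem nonneg_of_hasDerivAt_nonneg {f f' : ℝ → ℝ} (hf : ∀ x, HasDerivAt f (f' x) x)
    (h₀ : 0 ≤ f 0) (hf' : ∀ x, 0 < x → 0 ≤ f' x) {x : ℝ} (hx : 0 ≤ x) : 0 ≤ f x := by
  have hmono : MonotoneOn f (Set.Ici 0) :=
    monotoneOn_of_hasDerivWithinAt_nonneg (convex_Ici 0)
      (fun y _ => (hf y).continuousAt.continuousWithinAt) (fun y _ => (hf y).hasDerivWithinAt)
      (fun y hy => hf' y (by simpa using hy))
  exact h₀.trans (hmono Set.self_mem_Ici hx hx)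

namespace Real

noncomputable def sinTaylor (n : ℕ) (x : ℝ) : ℝ :=
  ∑ k ∈ range n, (-1) ^ k * x ^ (2 * k + 1) / (2 * k + 1)!

noncomputable def cosTaylor (n : ℕ) (x : ℝ) : ℝ :=
  ∑ k ∈ range n, (-1) ^ k * x ^ (2 * k) / (2 * k)!

theorem hasDerivAt_pow_succ_div_factorial (m : ℕ) (x : ℝ) :
    HasDerivAt (fun y : ℝ => y ^ (m + 1) / (m + 1)!) (x ^ m / m !) x := by
  refine ((hasDerivAt_pow (m + 1) x).div_const _).congr_deriv ?_
  rw [Nat.factorial_succ, Nat.cast_mul]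
  field_simp
  push_cast
  ring

theorem hasDerivAt_sinTaylor (n : ℕ) (x : ℝ) :
    HasDerivAt (sinTaylor n) (cosTaylor n x) x := by
  unfold sinTaylor cosTaylor
  refine HasDerivAt.fun_sum fun k _ => ?_
  simpa only [mul_div_assoc] using
    (hasDerivAt_pow_succ_div_factorial (2 * k) x).const_mul ((-1 : ℝ) ^ k)

theorem hasDerivAt_cosTaylor_succ (n : ℕ) (x : ℝ) :
    HasDerivAt (cosTaylor (n + 1)) (-sinTaylor n x) x := by
  have h : cosTaylor (n + 1) =
      fun y => 1 - ∑ k ∈ range n, (-1 : ℝ) ^ k * (y ^ (2 * k + 1 + 1) / (2 * k + 1 + 1)!) := by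
    ext y
    rw [cosTaylor, sum_range_succ', sub_eq_add_neg, add_comm]
    congr 1
    · simp
    · rw [← sum_neg_distrib]
      refine sum_congr rfl fun k _ => ?_
      rw [show 2 * (k + 1) = 2 * k + 1 + 1 by ring, pow_succ]
      ring
  rw [h]
  refine ((hasDerivAt_const x (1 : ℝ)).fun_sub (HasDerivAt.fun_sum (u := range n) fun k _ =>
    (hasDerivAt_pow_succ_div_factorial (2 * k + 1) x).const_mul ((-1 : ℝ) ^ k))).congr_deriv ?_
  simp [sinTaylor, mul_div_assoc]

theorem neg_one_pow_mul_sin_sub_sinTaylor_nonneg_of_cos {n : ℕ}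
    (hcos : ∀ y, 0 ≤ y → 0 ≤ (-1) ^ n * (cos y - cosTaylor n y)) {x : ℝ} (hx : 0 ≤ x) :
    0 ≤ (-1) ^ n * (sin x - sinTaylor n x) :=
  nonneg_of_hasDerivAt_nonneg
    (fun y => ((hasDerivAt_sin y).sub (hasDerivAt_sinTaylor n y)).const_mul _)
    (by simp [sinTaylor]) (fun y hy => hcos y hy.le) hx

theorem neg_one_pow_mul_cos_sub_cosTaylor_succ_nonneg_of_sin {n : ℕ}
    (hsin : ∀ y, 0 ≤ y → 0 ≤ (-1) ^ n * (sin y - sinTaylor n y)) {x : ℝ} (hx : 0 ≤ x) :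
    0 ≤ (-1) ^ (n + 1) * (cos x - cosTaylor (n + 1) x) :=
  nonneg_of_hasDerivAt_nonneg
    (fun y => ((hasDerivAt_cos y).sub (hasDerivAt_cosTaylor_succ n y)).const_mul _)
    (by simp [cosTaylor, sum_range_succ'])
    (fun y hy => by convert hsin y hy.le using 1; ring) hx

theorem neg_one_pow_mul_cos_sub_cosTaylor_nonneg (n : ℕ) {x : ℝ} (hx : 0 ≤ x) :
    0 ≤ (-1) ^ (n + 1) * (cos x - cosTaylor (n + 1) x) := by
  induction n generalizing x with
  | zero => simpa [cosTaylor] using cos_le_one x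
  | succ n ih =>
    exact neg_one_pow_mul_cos_sub_cosTaylor_succ_nonneg_of_sin
      (fun y hy => neg_one_pow_mul_sin_sub_sinTaylor_nonneg_of_cos (fun z hz => ih hz) hy) hx

theorem neg_one_pow_mul_sin_sub_sinTaylor_nonneg (n : ℕ) {x : ℝ} (hx : 0 ≤ x) :
    0 ≤ (-1) ^ (n + 1) * (sin x - sinTaylor (n + 1) x) :=
  neg_one_pow_mul_sin_sub_sinTaylor_nonneg_of_cos
    (fun _ hy => neg_one_pow_mul_cos_sub_cosTaylor_nonneg n hy) hx

theorem sin_le_sinTaylor_three {x : ℝ} (hx : 0 ≤ x) :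
    sin x ≤ x - x ^ 3 / 6 + x ^ 5 / 120 := by
  have h := neg_one_pow_mul_sin_sub_sinTaylor_nonneg 2 hx
  norm_num [sinTaylor, sum_range_succ, Nat.factorial] at h
  linarith

theorem sinTaylor_four_le_sin {x : ℝ} (hx : 0 ≤ x) :
    x - x ^ 3 / 6 + x ^ 5 / 120 - x ^ 7 / 5040 ≤ sin x := by
  have h := neg_one_pow_mul_sin_sub_sinTaylor_nonneg 3 hx
  norm_num [sinTaylor, sum_range_succ, Nat.factorial] at h
  linarith

end Real

theorem parabola_sub_sin_le {x : ℝ} (hx₀ : 0 ≤ x) (hx : x ≤ π / 2) :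
    4 * x * (π - x) / π ^ 2 - sin x ≤ 3.21 * (π / 180) := by
  have hπ₁ := pi_gt_d6
  have hπ₂ := pi_lt_d6
  have hparabola : 4 * x * (π - x) / π ^ 2 ≤ 4 * x / 3.141592 - 4 * x ^ 2 / 3.141593 ^ 2 := by
    rw [show 4 * x * (π - x) / π ^ 2 = 4 * x / π - 4 * x ^ 2 / π ^ 2 by field_simp]
    gcongr
  have hpoly : 4 * x / 3.141592 - 4 * x ^ 2 / 3.141593 ^ 2
      - (x - x ^ 3 / 6 + x ^ 5 / 120 - x ^ 7 / 5040) ≤ 3.21 * (3.141592 / 180) := by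
    have hx₁ : 0 ≤ 1.5708 - x := by linarith
    -- `(x - 0.472)²` times the degree-5 Bernstein basis of `[0, 1.5708]`; `0.472` is close to
    -- the point of largest error
    have h i j := mul_nonneg (mul_nonneg (pow_nonneg hx₀ i) (pow_nonneg hx₁ j))
      (sq_nonneg (x - 0.472))
    have := h 0 5; have := h 1 4; have := h 2 3; have := h 3 2; have := h 4 1; have := h 5 0
    ring_nf at *
    linarith
  linarith [sinTaylor_four_le_sin hx₀]

theorem neg_le_parabola_sub_sin {x : ℝ} (hx₀ : 0 ≤ x) (hx : x ≤ π / 2) :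
    -(3.21 * (π / 180)) ≤ 4 * x * (π - x) / π ^ 2 - sin x := by
  have hπ₁ := pi_gt_d6
  have hπ₂ := pi_lt_d6
  have hparabola : 4 * x / 3.141593 - 4 * x ^ 2 / 3.141592 ^ 2 ≤ 4 * x * (π - x) / π ^ 2 := by
    rw [show 4 * x * (π - x) / π ^ 2 = 4 * x / π - 4 * x ^ 2 / π ^ 2 by field_simp]
    gcongr
  have hpoly : -(3.21 * (3.141592 / 180)) ≤
      4 * x / 3.141593 - 4 * x ^ 2 / 3.141592 ^ 2 - (x - x ^ 3 / 6 + x ^ 5 / 120) := by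
    have hx₁ : 0 ≤ 1.5708 - x := by linarith
    -- the degree-5 Bernstein basis of `[0, 1.5708]`
    have h i j := mul_nonneg (pow_nonneg hx₀ i) (pow_nonneg hx₁ j)
    have := h 0 5; have := h 1 4; have := h 2 3; have := h 3 2; have := h 4 1; have := h 5 0
    ring_nf at *
    linarith
  linarith [sin_le_sinTaylor_three hx₀]

theorem abs_parabola_sub_sin_le {x : ℝ} (hx₀ : 0 ≤ x) (hx : x ≤ π) :
    |4 * x * (π - x) / π ^ 2 - sin x| ≤ 3.21 * (π / 180) := by
  rcases le_total x (π / 2) with h | h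
  · exact abs_le.2 ⟨neg_le_parabola_sub_sin hx₀ h, parabola_sub_sin_le hx₀ h⟩
  · have hrefl : 4 * x * (π - x) / π ^ 2 - sin x
        = 4 * (π - x) * (π - (π - x)) / π ^ 2 - sin (π - x) := by
      rw [sin_pi_sub]; ring
    rw [hrefl, abs_le]
    exact ⟨neg_le_parabola_sub_sin (by linarith) (by linarith),
      parabola_sub_sin_le (by linarith) (by linarith)⟩

noncomputable def spiralEasement (θ : ℝ) : ℝ :=
  16 / π ^ 2 * arcsin (cos (θ / 2)) * arcsin (sin (θ / 2))

theorem spiralEasement_antiperiodic : Function.Antiperiodic spiralEasement π := by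
  intro θ
  rw [spiralEasement, spiralEasement, add_div, cos_add_pi_div_two, sin_add_pi_div_two,
    arcsin_neg]
  ring

theorem spiralEasement_eq {θ : ℝ} (h₀ : 0 ≤ θ) (hπ : θ ≤ π) :
    spiralEasement θ = 4 * θ * (π - θ) / π ^ 2 := by
  have hπ₀ := pi_pos
  have hsin : arcsin (sin (θ / 2)) = θ / 2 := arcsin_sin (by linarith) (by linarith)
  have hcos : arcsin (cos (θ / 2)) = π / 2 - θ / 2 := by
    rw [← sin_pi_div_two_sub]
    exact arcsin_sin (by linarith) (by linarith)
  rw [spiralEasement, hsin, hcos]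
  field_simp
  ring

theorem spiral_easement_approximation_error_bound :
    ∀ θ : ℝ,
      |(16 / Real.pi ^ 2) * Real.arcsin (Real.cos (θ / 2))
          * Real.arcsin (Real.sin (θ / 2)) - Real.sin θ|
        ≤ 3.21 * (Real.pi / 180) := by
  intro θ
  change |spiralEasement θ - sin θ| ≤ _
  have hperiodic : Function.Periodic (fun θ => |spiralEasement θ - sin θ|) π := fun θ => by
    simp only [spiralEasement_antiperiodic θ, sin_antiperiodic θ, neg_sub_neg, abs_sub_comm]
  obtain ⟨x, ⟨hx₀, hx⟩, hθx⟩ := hperiodic.exists_mem_Ico₀ pi_pos θ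
  rw [hθx, spiralEasement_eq hx₀ hx.le]
  exact abs_parabola_sub_sin_le hx₀ hx.le
end
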